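/- arXiv:1011.5318 — 3 statements merged into one kernel-verified Lean document; each statement's English description precedes it below -/
import Mathlib

section
/- If liminf_{k→∞} k P_k > 0, then there exist τ ≥ 2 and K ≥ 4τ such that for all k ≥ K and all real s with 1/2 ≤ s ≤ 1 − τ/k, |f(s a_k)| ≤ r_{k+1}/2. -/
/-!
At `z = s a_k` the factor `1 - z / a_k` has modulus `1 - s`. Since `r` at least doubles from some
index `k₀` on, the factors with `j > k` have product at most `e`, each factor with `k₀ ≤ j < k`
obeys `|1 - z / a_j| ≤ s (1 + 2 / 2^(k-j)) (1 + r_k / r_j)`, and those with `j < k₀` are at most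
`1 + r_k / r_j`. Comparing with the recursion for `r_{k+1}`, the claim reduces to
`|C| e³ (1 - s) s^(k-k₀) ≤ P_k`. As `k (1 - s) s^k ≤ 2 e^(-τ/2)` for `s ≤ 1 - τ / k`, this follows
for large `k` from `k P_k > c > 0` as soon as `e^(τ/2) ≥ 2^(k₀+1) |C| e³ / c`.
-/

open Filter

open Finset Real

theorem sum_one_div_two_pow_le_one {T : Finset ℕ} (hT : 0 ∉ T) :
    ∑ i ∈ T, (1 / 2 : ℝ) ^ i ≤ 1 := by
  have h := (summable_geometric_two.sum_le_tsum (insert 0 T) fun _ _ => by positivity).trans_eq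
    tsum_geometric_two
  rw [sum_insert hT, pow_zero] at h
  linarith

theorem prod_one_add_div_two_pow_le_exp {ι : Type*} (S : Finset ι) {g : ι → ℕ}
    (hg : Set.InjOn g S) (hg0 : ∀ j ∈ S, 1 ≤ g j) {c : ℝ} (hc : 0 ≤ c) :
    ∏ j ∈ S, (1 + c / 2 ^ g j) ≤ exp c := by
  classical
  calc ∏ j ∈ S, (1 + c / 2 ^ g j) ≤ exp (∑ j ∈ S, c / 2 ^ g j) :=
        prod_one_add_le_exp_sum S fun _ => by positivity
    _ = exp (c * ∑ i ∈ S.image g, (1 / 2) ^ i) := by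
        simp only [sum_image hg, mul_sum, one_div_pow, mul_one_div]
    _ ≤ exp c := by
        gcongr
        refine mul_le_of_le_one_right hc (sum_one_div_two_pow_le_one ?_)
        simp only [mem_image, not_exists, not_and]
        exact fun j hj h0 => by have := hg0 j hj; omega

theorem two_pow_sub_mul_le_of_doubling {r : ℕ → ℝ} {k0 : ℕ}
    (hd : ∀ m, k0 ≤ m → 2 * r m ≤ r (m + 1)) {j m : ℕ} (hj : k0 ≤ j) (hjm : j ≤ m) :
    2 ^ (m - j) * r j ≤ r m := by
  induction m, hjm using Nat.le_induction with
  | base => simp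
  | succ m hjm ih =>
    rw [Nat.sub_add_comm hjm, pow_succ]
    linarith [hd m (hj.trans hjm)]

theorem one_add_mul_le_mul_one_add_two_div_mul {s X T : ℝ} (hs : 1 / 2 ≤ s)
    (hT : 0 < T) (hTX : T ≤ X) : 1 + s * X ≤ s * (1 + 2 / T) * (1 + X) := by
  have h : 1 ≤ 2 * s * (1 + X) / T := by
    rw [le_div_iff₀ hT]
    nlinarith
  have : s * (1 + 2 / T) * (1 + X) = s + s * X + 2 * s * (1 + X) / T := by
    field_simp
  nlinarith

theorem prod_Ico_one_add_mul_le {X : ℕ → ℝ} {s : ℝ} {k0 k : ℕ} (hs : 1 / 2 ≤ s)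
    (hX : ∀ m ∈ Ico k0 k, 2 ^ (k - m) ≤ X m) :
    ∏ m ∈ Ico k0 k, (1 + s * X m) ≤ exp 2 * s ^ (k - k0) * ∏ m ∈ Ico k0 k, (1 + X m) := by
  have hX0 : ∀ m ∈ Ico k0 k, 0 ≤ X m := fun m hm => (hX m hm).trans' (by positivity)
  calc ∏ m ∈ Ico k0 k, (1 + s * X m)
      ≤ ∏ m ∈ Ico k0 k, (s * (1 + 2 / 2 ^ (k - m)) * (1 + X m)) :=
        prod_le_prod (fun m hm => by have := hX0 m hm; positivity) fun m hm =>
          one_add_mul_le_mul_one_add_two_div_mul hs (by positivity) (hX m hm)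
    _ = s ^ (k - k0) * (∏ m ∈ Ico k0 k, (1 + 2 / 2 ^ (k - m))) * ∏ m ∈ Ico k0 k, (1 + X m) := by
        rw [prod_mul_distrib, prod_mul_distrib, prod_const, Nat.card_Ico]
    _ ≤ s ^ (k - k0) * exp 2 * ∏ m ∈ Ico k0 k, (1 + X m) := by
        refine mul_le_mul_of_nonneg_right (mul_le_mul_of_nonneg_left ?_ (by positivity))
          (prod_nonneg fun m hm => by have := hX0 m hm; positivity)
        refine prod_one_add_div_two_pow_le_exp _ (fun m hm m' hm' h => ?_) (fun m hm => ?_)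
          zero_le_two
        · simp only [coe_Ico, Set.mem_Ico] at hm hm'
          omega
        · simp only [mem_Ico] at hm
          omega
    _ = exp 2 * s ^ (k - k0) * ∏ m ∈ Ico k0 k, (1 + X m) := by ring

theorem prod_Ico_one_add_le_exp_one {X : ℕ → ℝ} {k n : ℕ}
    (hX0 : ∀ m ∈ Ico (k + 1) n, 0 ≤ X m) (hX : ∀ m ∈ Ico (k + 1) n, X m ≤ 1 / 2 ^ (m - k)) :
    ∏ m ∈ Ico (k + 1) n, (1 + X m) ≤ exp 1 := by
  calc ∏ m ∈ Ico (k + 1) n, (1 + X m) ≤ ∏ m ∈ Ico (k + 1) n, (1 + 1 / 2 ^ (m - k)) :=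
        prod_le_prod (fun m hm => by have := hX0 m hm; positivity) fun m hm => by
          linarith [hX m hm]
    _ ≤ exp 1 := by
        refine prod_one_add_div_two_pow_le_exp _ (fun m hm m' hm' h => ?_) (fun m hm => ?_)
          zero_le_one
        · simp only [coe_Ico, Set.mem_Ico] at hm hm'
          omega
        · simp only [mem_Ico] at hm
          omega

/-- The factor estimates at `z = s a_k`, with `u m = ‖1 - z / a_m‖` and `X m = r_k / r_m`. -/
theorem prod_Ico_le_exp_three_mul_one_sub_mul_pow {u X : ℕ → ℝ} {s : ℝ} {k0 k n : ℕ}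
    (hk0 : 1 ≤ k0) (hk : k0 ≤ k) (hn : k < n) (hs : 1 / 2 ≤ s) (hs1 : s ≤ 1)
    (hu0 : ∀ m, 0 ≤ u m) (hu : ∀ m, 1 ≤ m → u m ≤ 1 + s * X m) (huk : u k = 1 - s)
    (hX0 : ∀ m, 1 ≤ m → 0 ≤ X m) (hlow : ∀ m, k0 ≤ m → m ≤ k → 2 ^ (k - m) ≤ X m)
    (hup : ∀ m, k ≤ m → X m ≤ 1 / 2 ^ (m - k)) :
    ∏ m ∈ Ico 1 n, u m ≤ exp 3 * (1 - s) * s ^ (k - k0) * ∏ m ∈ Ico 1 k, (1 + X m) := by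
  have hsX : ∀ m, 1 ≤ m → u m ≤ 1 + X m := fun m hm =>
    (hu m hm).trans (by nlinarith [hX0 m hm])
  have hhead : ∏ m ∈ Ico 1 k0, u m ≤ ∏ m ∈ Ico 1 k0, (1 + X m) :=
    prod_le_prod (fun m _ => hu0 m) fun m hm => hsX m (mem_Ico.1 hm).1
  have hmiddle : ∏ m ∈ Ico k0 k, u m ≤ exp 2 * s ^ (k - k0) * ∏ m ∈ Ico k0 k, (1 + X m) := by
    refine (prod_le_prod (fun m _ => hu0 m) fun m hm => hu m ?_).trans
      (prod_Ico_one_add_mul_le hs fun m hm => hlow m (mem_Ico.1 hm).1 (mem_Ico.1 hm).2.le)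
    exact hk0.trans (mem_Ico.1 hm).1
  have htail : ∏ m ∈ Ico (k + 1) n, u m ≤ exp 1 := by
    refine (prod_le_prod (fun m _ => hu0 m) fun m hm => hsX m ?_).trans
      (prod_Ico_one_add_le_exp_one (fun m hm => hX0 m ?_) fun m hm => hup m ?_) <;>
    · simp only [mem_Ico] at hm
      omega
  have hXprod : ∀ i j, 1 ≤ i → 0 ≤ ∏ m ∈ Ico i j, (1 + X m) := fun i j hi =>
    prod_nonneg fun m hm => by have := hX0 m (hi.trans (mem_Ico.1 hm).1); positivity
  rw [← prod_Ico_consecutive u (hk0.trans hk) hn.le, ← prod_Ico_consecutive u hk0 hk,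
    prod_eq_prod_Ico_succ_bot hn, huk, ← prod_Ico_consecutive _ hk0 hk]
  calc (∏ m ∈ Ico 1 k0, u m) * (∏ m ∈ Ico k0 k, u m) * ((1 - s) * ∏ m ∈ Ico (k + 1) n, u m)
      ≤ (∏ m ∈ Ico 1 k0, (1 + X m)) * (exp 2 * s ^ (k - k0) * ∏ m ∈ Ico k0 k, (1 + X m)) *
          ((1 - s) * exp 1) := by
        refine mul_le_mul
          (mul_le_mul hhead hmiddle (prod_nonneg fun m _ => hu0 m) (hXprod 1 k0 le_rfl))
          (mul_le_mul_of_nonneg_left htail (by linarith))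
          (mul_nonneg (by linarith) (prod_nonneg fun m _ => hu0 m))
          (mul_nonneg (hXprod 1 k0 le_rfl) (by have := hXprod k0 k hk0; positivity))
    _ = exp 3 * (1 - s) * s ^ (k - k0) *
          ((∏ m ∈ Ico 1 k0, (1 + X m)) * ∏ m ∈ Ico k0 k, (1 + X m)) := by
        rw [show (3 : ℝ) = 2 + 1 by norm_num, exp_add]
        ring

theorem norm_one_sub_div_le {𝕜 : Type*} [NormedDivisionRing 𝕜] (z w : 𝕜) :
    ‖1 - z / w‖ ≤ 1 + ‖z‖ / ‖w‖ := by
  simpa only [norm_one, norm_div] using norm_sub_le (1 : 𝕜) (z / w)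

theorem norm_tprod_one_sub_mul_div_le {a : ℕ → ℂ} {r : ℕ → ℝ} {k0 k : ℕ} {s : ℝ}
    (hr : ∀ m, 1 ≤ m → 0 < r m) (ha : ∀ m, 1 ≤ m → ‖a m‖ = r m)
    (hd : ∀ m, k0 ≤ m → 2 * r m ≤ r (m + 1)) (hk0 : 1 ≤ k0) (hk : k0 ≤ k)
    (hs : 1 / 2 ≤ s) (hs1 : s ≤ 1) (hmul : Multipliable fun j => 1 - s * a k / a (j + 1)) :
    ‖∏' j, (1 - s * a k / a (j + 1))‖ ≤
      exp 3 * (1 - s) * s ^ (k - k0) * ∏ m ∈ Ico 1 k, (1 + r k / r m) := by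
  have hk1 : 1 ≤ k := hk0.trans hk
  refine le_of_tendsto hmul.hasProd.tendsto_prod_nat.norm ?_
  filter_upwards [eventually_gt_atTop k] with n hn
  rw [norm_prod, range_eq_Ico, prod_Ico_add' (fun m => ‖1 - s * a k / a m‖), zero_add]
  refine prod_Ico_le_exp_three_mul_one_sub_mul_pow hk0 hk (by omega) hs hs1
    (fun m => norm_nonneg _) (fun m hm => ?_) ?_ (fun m hm => (div_pos (hr k hk1) (hr m hm)).le)
    (fun m hm hmk => ?_) (fun m hm => ?_)
  · calc ‖1 - s * a k / a m‖ ≤ 1 + ‖s * a k‖ / ‖a m‖ := norm_one_sub_div_le _ _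
      _ = 1 + s * (r k / r m) := by
        rw [norm_mul, Complex.norm_of_nonneg (by linarith), ha k hk1, ha m hm, mul_div_assoc]
  · have hak : a k ≠ 0 := norm_pos_iff.1 ((ha k hk1).symm ▸ hr k hk1)
    rw [mul_div_cancel_right₀ _ hak, ← Complex.ofReal_one, ← Complex.ofReal_sub,
      Complex.norm_of_nonneg (by linarith)]
  · rw [le_div_iff₀ (hr m (hk0.trans hm))]
    exact two_pow_sub_mul_le_of_doubling hd hm hmk
  · rw [div_le_div_iff₀ (hr m (hk1.trans hm)) (by positivity), one_mul, mul_comm]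
    exact two_pow_sub_mul_le_of_doubling hd hk hm

theorem mul_one_sub_mul_pow_le_two_mul_exp {s τ : ℝ} {k : ℕ} (hs0 : 0 ≤ s) (hτ : 0 ≤ τ)
    (hτk : τ ≤ k * (1 - s)) : k * (1 - s) * s ^ k ≤ 2 * exp (-(τ / 2)) := by
  set x := (k : ℝ) * (1 - s) with hx_def
  have hpow : s ^ k ≤ exp (-x) :=
    calc s ^ k ≤ exp (s - 1) ^ k :=
          pow_le_pow_left₀ hs0 (by linarith [add_one_le_exp (s - 1)]) k
      _ = exp (-x) := by rw [← exp_nat_mul, hx_def]; ring_nf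
  have hx : x ≤ 2 * exp (x / 2) := by linarith [add_one_le_exp (x / 2)]
  calc x * s ^ k ≤ x * exp (-x) := mul_le_mul_of_nonneg_left hpow (hτ.trans hτk)
    _ ≤ 2 * exp (x / 2) * exp (-x) := by gcongr
    _ = 2 * exp (-(x / 2)) := by rw [mul_assoc, ← exp_add]; ring_nf
    _ ≤ 2 * exp (-(τ / 2)) := by gcongr

theorem pow_sub_le_two_pow_mul_pow {s : ℝ} (hs : 1 / 2 ≤ s) {k0 k : ℕ} (hk : k0 ≤ k) :
    s ^ (k - k0) ≤ 2 ^ k0 * s ^ k := by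
  calc s ^ (k - k0) ≤ s ^ (k - k0) * (2 * s) ^ k0 :=
        le_mul_of_one_le_right (by positivity) (one_le_pow₀ (by linarith))
    _ = 2 ^ k0 * s ^ (k - k0 + k0) := by ring
    _ = 2 ^ k0 * s ^ k := by rw [Nat.sub_add_cancel hk]

theorem mul_exp_neg_half_le {D c τ : ℝ} (hD : 0 ≤ D) (hc : 0 < c) (hτ : 2 * log (D / c) ≤ τ) :
    D * exp (-(τ / 2)) ≤ c := by
  rcases hD.eq_or_lt with rfl | hD
  · simpa using hc.le
  calc D * exp (-(τ / 2)) ≤ D * exp (-log (D / c)) := by gcongr; linarith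
    _ = c := by rw [exp_neg, exp_log (by positivity), inv_div]; field_simp

theorem mul_one_sub_mul_pow_sub_le {A c p s τ : ℝ} {k0 k : ℕ} (hA : 0 ≤ A) (hc : 0 < c)
    (hτ0 : 0 ≤ τ) (hτ : 2 * log (2 ^ (k0 + 1) * A / c) ≤ τ) (hs : 1 / 2 ≤ s)
    (hτk : τ ≤ k * (1 - s)) (hk : k0 ≤ k) (hp : c < k * p) :
    A * (1 - s) * s ^ (k - k0) ≤ p := by
  have hkpos : (0 : ℝ) < k := Nat.cast_pos.2 <| Nat.pos_of_ne_zero fun h => by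
    simp only [h, Nat.cast_zero, zero_mul] at hp
    linarith
  have hs1 : 0 ≤ 1 - s := (mul_nonneg_iff_of_pos_left hkpos).1 (hτ0.trans hτk)
  refine le_of_mul_le_mul_left ?_ hkpos
  calc k * (A * (1 - s) * s ^ (k - k0)) ≤ k * (A * (1 - s) * (2 ^ k0 * s ^ k)) := by
        gcongr
        exact pow_sub_le_two_pow_mul_pow hs hk
    _ = 2 ^ k0 * A * (k * (1 - s) * s ^ k) := by ring
    _ ≤ 2 ^ k0 * A * (2 * exp (-(τ / 2))) := mul_le_mul_of_nonneg_left
        (mul_one_sub_mul_pow_le_two_mul_exp (by linarith) hτ0 hτk) (by positivity)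
    _ = 2 ^ (k0 + 1) * A * exp (-(τ / 2)) := by ring
    _ ≤ c := mul_exp_neg_half_le (by positivity) hc hτ
    _ ≤ k * p := hp.le

theorem prod_Icc_one_add_div_self {r : ℕ → ℝ} {k : ℕ} (hk : 1 ≤ k) (hr : r k ≠ 0) :
    ∏ j ∈ Icc 1 k, (1 + r k / r j) = 2 * ∏ j ∈ Ico 1 k, (1 + r k / r j) := by
  rw [← Ico_add_one_right_eq_Icc, prod_Ico_succ_top hk, div_self hr]
  ring

theorem norm_mul_pow_mul_tprod_le_half {a : ℕ → ℂ} {r : ℕ → ℝ} {C : ℂ} {N k0 k : ℕ} {s p : ℝ}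
    (hr : ∀ m, 1 ≤ m → 0 < r m) (ha : ∀ m, 1 ≤ m → ‖a m‖ = r m)
    (hd : ∀ m, k0 ≤ m → 2 * r m ≤ r (m + 1)) (hk0 : 1 ≤ k0) (hk : k0 ≤ k)
    (hs : 1 / 2 ≤ s) (hs1 : s ≤ 1) (hmul : Multipliable fun j => 1 - s * a k / a (j + 1))
    (hrec : r (k + 1) = p * r k ^ N * ∏ j ∈ Icc 1 k, (1 + r k / r j))
    (hp : ‖C‖ * exp 3 * (1 - s) * s ^ (k - k0) ≤ p) :
    ‖C * (s * a k) ^ N * ∏' j, (1 - s * a k / a (j + 1))‖ ≤ r (k + 1) / 2 := by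
  have hk1 : 1 ≤ k := hk0.trans hk
  have hrk := hr k hk1
  have hQ0 : 0 ≤ ∏ m ∈ Ico 1 k, (1 + r k / r m) :=
    prod_nonneg fun m hm => by have := hr m (mem_Ico.1 hm).1; positivity
  rw [norm_mul, norm_mul, norm_pow, norm_mul, Complex.norm_of_nonneg (by linarith), ha k hk1]
  calc ‖C‖ * (s * r k) ^ N * ‖∏' j, (1 - s * a k / a (j + 1))‖
      ≤ ‖C‖ * r k ^ N * (exp 3 * (1 - s) * s ^ (k - k0) * ∏ m ∈ Ico 1 k, (1 + r k / r m)) := by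
        gcongr
        · nlinarith
        · exact norm_tprod_one_sub_mul_div_le hr ha hd hk0 hk hs hs1 hmul
    _ = ‖C‖ * exp 3 * (1 - s) * s ^ (k - k0) * (r k ^ N * ∏ m ∈ Ico 1 k, (1 + r k / r m)) := by
        ring
    _ ≤ p * (r k ^ N * ∏ m ∈ Ico 1 k, (1 + r k / r m)) := by gcongr
    _ = r (k + 1) / 2 := by rw [hrec, prod_Icc_one_add_div_self hk1 hrk.ne']; ring

theorem stmt_13_general (N : ℕ) (C : ℂ)
    (P r : ℕ → ℝ)
    (hrpos : ∀ k, 1 ≤ k → 0 < r k)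
    (hr2 : ∀ᶠ k in atTop, 2 * r k ≤ r (k + 1))
    (hrec : ∀ k, 1 ≤ k →
      r (k + 1) = P k * (r k) ^ N * ∏ j ∈ Finset.Icc 1 k, (1 + r k / r j))
    (a : ℕ → ℂ) (ha : ∀ k, 1 ≤ k → ‖a k‖ = r k)
    (f : ℂ → ℂ)
    (hmul : ∀ z : ℂ, Multipliable (fun k : ℕ => 1 - z / a (k + 1)))
    (hf : ∀ z : ℂ, f z = C * z ^ N * ∏' k : ℕ, (1 - z / a (k + 1)))
    (hinf : (0 : EReal) <
      Filter.liminf (fun k : ℕ => (((k : ℝ) * P k : ℝ) : EReal)) atTop) :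
    ∃ τ : ℝ, 2 ≤ τ ∧ ∃ K : ℕ, 4 * τ ≤ (K : ℝ) ∧ ∀ k, K ≤ k →
      ∀ s : ℝ, 1 / 2 ≤ s → s ≤ 1 - τ / (k : ℝ) →
        ‖f ((s : ℂ) * a k)‖ ≤ r (k + 1) / 2 := by
  obtain ⟨c, hc0, hc⟩ := EReal.lt_iff_exists_real_btwn.1 hinf
  obtain ⟨K1, hK1⟩ := eventually_atTop.1 (eventually_lt_of_lt_liminf hc)
  obtain ⟨k0', hd⟩ := eventually_atTop.1 hr2
  set k0 := max k0' 1
  set τ := max 2 (2 * log (2 ^ (k0 + 1) * (‖C‖ * exp 3) / c))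
  refine ⟨τ, le_max_left _ _, max (max K1 k0) ⌈4 * τ⌉₊,
    (Nat.le_ceil _).trans (mod_cast le_max_right _ _), fun k hk s hs hsτ => ?_⟩
  obtain ⟨⟨hK1k, hk0k⟩, -⟩ : (K1 ≤ k ∧ k0 ≤ k) ∧ ⌈4 * τ⌉₊ ≤ k := by
    simpa only [max_le_iff] using hk
  have hkpos : (0 : ℝ) < k := Nat.cast_pos.2 ((le_max_right _ _).trans hk0k)
  have hτ0 : 0 ≤ τ := zero_le_two.trans (le_max_left _ _)
  have hτk : τ ≤ k * (1 - s) := by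
    rw [← div_le_iff₀' hkpos]
    linarith
  have hs1 : s ≤ 1 := by linarith [div_nonneg hτ0 hkpos.le]
  rw [hf]
  refine norm_mul_pow_mul_tprod_le_half hrpos ha (fun m hm => hd m (le_of_max_le_left hm))
    (le_max_right _ _) hk0k hs hs1 (hmul _) (hrec k ((le_max_right _ _).trans hk0k)) ?_
  exact mul_one_sub_mul_pow_sub_le (by positivity) (EReal.coe_pos.1 hc0) hτ0 (le_max_right _ _)
    hs hτk hk0k (mod_cast hK1 k hK1k)

/-- if `liminf k P_k > 0`, then there are `τ ≥ 2` and `K ≥ 4τ` such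
that for all `k ≥ K` and all real `s ∈ [1/2, 1 - τ/k]`, `|f(s a_k)| ≤ r_{k+1}/2`. -/
theorem stmt_13 (N : ℕ) (C : ℂ) (hC : C ≠ 0)
    (P r : ℕ → ℝ)
    (hP : ∀ k, 1 ≤ k → 0 < P k)
    (hPlim : Tendsto (fun k : ℕ => (P k) ^ ((1 : ℝ) / k)) atTop (nhds 1))
    (hrpos : ∀ k, 1 ≤ k → 0 < r k)
    (hr2 : ∀ᶠ k in atTop, 2 * r k ≤ r (k + 1))
    (hrec : ∀ k, 1 ≤ k →
      r (k + 1) = P k * (r k) ^ N * ∏ j ∈ Finset.Icc 1 k, (1 + r k / r j))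
    (a : ℕ → ℂ) (ha : ∀ k, 1 ≤ k → ‖a k‖ = r k)
    (f : ℂ → ℂ)
    (hmul : ∀ z : ℂ, Multipliable (fun k : ℕ => 1 - z / a (k + 1)))
    (hf : ∀ z : ℂ, f z = C * z ^ N * ∏' k : ℕ, (1 - z / a (k + 1)))
    (hinf : (0 : EReal) <
      Filter.liminf (fun k : ℕ => (((k : ℝ) * P k : ℝ) : EReal)) atTop) :
    ∃ τ : ℝ, 2 ≤ τ ∧ ∃ K : ℕ, 4 * τ ≤ (K : ℝ) ∧ ∀ k, K ≤ k →
      ∀ s : ℝ, 1 / 2 ≤ s → s ≤ 1 - τ / (k : ℝ) →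
        ‖f ((s : ℂ) * a k)‖ ≤ r (k + 1) / 2 :=
  stmt_13_general N C P r hrpos hr2 hrec a ha f hmul hf hinf
end

section
/- Let 0 < r < R and let γ : [0,1] → ℂ be a piecewise continuously differentiable closed curve (γ(0) = γ(1)) with r < |γ(t)| < R for all t. Then ∫₀¹ π |γ'(t)| / ( |γ(t)| · sin(π log(|γ(t)|/r) / log(R/r)) · log(R/r) ) dt ≥ 2π² |n(γ,0)| / log(R/r), where n(γ,0) = (1/(2π)) Im ∫₀¹ γ'(t)/γ(t) dt is the winding number of γ about 0. -/
/-!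
Since `sin ≤ 1`, the hyperbolic density of the annulus is at least `π / (‖z‖ log (R / r))`. Hence
the hyperbolic length of `γ` is at least `π / log (R / r) · ∫ ‖γ' / γ‖`, which dominates
`π / log (R / r) · |Im ∫ γ' / γ| = 2π² |n(γ, 0)| / log (R / r)`.
-/

open MeasureTheory Set Real

noncomputable def annulusHypDensity (r R : ℝ) (z : ℂ) : ℝ :=
  π / (‖z‖ * sin (π * log (‖z‖ / r) / log (R / r)) * log (R / r))

lemma sin_pi_mul_log_div_log_pos {r R x : ℝ} (hr : 0 < r) (hrx : r < x) (hxR : x < R) :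
    0 < sin (π * log (x / r) / log (R / r)) := by
  have hL : 0 < log (R / r) := log_pos ((one_lt_div hr).2 (hrx.trans hxR))
  have hlog_pos : 0 < log (x / r) := log_pos ((one_lt_div hr).2 hrx)
  have hlog_lt : log (x / r) < log (R / r) :=
    log_lt_log (div_pos (hr.trans hrx) hr) ((div_lt_div_iff_of_pos_right hr).2 hxR)
  apply sin_pos_of_pos_of_lt_pi (by positivity)
  rw [div_lt_iff₀ hL]
  nlinarith [pi_pos]

lemma continuousOn_annulusHypDensity {r R : ℝ} (hr : 0 < r) :
    ContinuousOn (annulusHypDensity r R) {z : ℂ | r < ‖z‖ ∧ ‖z‖ < R} := by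
  intro z ⟨hrz, hzR⟩
  have hL : 0 < log (R / r) := log_pos ((one_lt_div hr).2 (hrz.trans hzR))
  have hsin := sin_pi_mul_log_div_log_pos hr hrz hzR
  have hz : 0 < ‖z‖ := hr.trans hrz
  refine ContinuousAt.continuousWithinAt ?_
  unfold annulusHypDensity
  fun_prop (disch := positivity)

lemma pi_div_mul_log_le_annulusHypDensity {r R : ℝ} (hr : 0 < r) {z : ℂ} (hrz : r < ‖z‖)
    (hzR : ‖z‖ < R) : π / (‖z‖ * log (R / r)) ≤ annulusHypDensity r R z := by
  have hL : 0 < log (R / r) := log_pos ((one_lt_div hr).2 (hrz.trans hzR))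
  have hsin := sin_pi_mul_log_div_log_pos hr hrz hzR
  have hz : 0 < ‖z‖ := hr.trans hrz
  unfold annulusHypDensity
  gcongr
  exact mul_le_of_le_one_right hz.le (sin_le_one _)

lemma pi_div_log_mul_norm_div_le {r R : ℝ} (hr : 0 < r) {z : ℂ} (hrz : r < ‖z‖) (hzR : ‖z‖ < R)
    (w : ℂ) : π / log (R / r) * ‖w / z‖ ≤ annulusHypDensity r R z * ‖w‖ :=
  calc π / log (R / r) * ‖w / z‖ = π / (‖z‖ * log (R / r)) * ‖w‖ := by
        rw [norm_div]; ring
    _ ≤ annulusHypDensity r R z * ‖w‖ := by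
        gcongr
        exact pi_div_mul_log_le_annulusHypDensity hr hrz hzR

lemma IntervalIntegrable.of_eqOn_Ioo {E : Type*} [NormedAddCommGroup E] {f g : ℝ → E} {a b : ℝ}
    (hab : a ≤ b) (hg : ContinuousOn g (Icc a b)) (hfg : EqOn f g (Ioo a b)) :
    IntervalIntegrable f volume a b :=
  (intervalIntegrable_iff_integrableOn_Ioo_of_le hab).2 <|
    ((hg.integrableOn_Icc).mono_set Ioo_subset_Icc_self).congr_fun hfg.symm measurableSet_Ioo

lemma Icc_subset_Icc_of_lt_succ {t : ℕ → ℝ} {n : ℕ} (ht : ∀ i < n, t i < t (i + 1))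
    {i : ℕ} (hi : i < n) : Icc (t i) (t (i + 1)) ⊆ Icc (t 0) (t n) := by
  have hmono := (strictMonoOn_Iic_of_lt_succ (ψ := t) ht).monotoneOn
  exact Icc_subset_Icc (hmono (Nat.zero_le n) hi.le (Nat.zero_le i)) (hmono hi self_mem_Iic hi)

theorem intervalIntegrable_comp_deriv_of_piecewise_contDiffOn {F E : Type*}
    [NormedAddCommGroup F] [NormedSpace ℝ F] [NormedAddCommGroup E]
    {γ : ℝ → F} {Φ : F → F → E} {U : Set F} {n : ℕ} {t : ℕ → ℝ}
    (ht : ∀ i < n, t i < t (i + 1)) (hγ : ∀ i < n, ContDiffOn ℝ 1 γ (Icc (t i) (t (i + 1))))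
    (hγU : MapsTo γ (Icc (t 0) (t n)) U) (hΦ : ContinuousOn (Function.uncurry Φ) (U ×ˢ univ)) :
    IntervalIntegrable (fun s ↦ Φ (γ s) (deriv γ s)) volume (t 0) (t n) := by
  refine IntervalIntegrable.trans_iterate fun i hi ↦ ?_
  set I := Icc (t i) (t (i + 1))
  have hγ' : ContinuousOn (derivWithin γ I) I :=
    (hγ i hi).continuousOn_derivWithin (uniqueDiffOn_Icc (ht i hi)) le_rfl
  have hmaps : MapsTo (fun s ↦ (γ s, derivWithin γ I s)) I (U ×ˢ univ) := fun s hs ↦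
    ⟨hγU (Icc_subset_Icc_of_lt_succ ht hi hs), mem_univ _⟩
  refine .of_eqOn_Ioo (ht i hi).le (hΦ.comp ((hγ i hi).continuousOn.prodMk hγ') hmaps) ?_
  intro s hs
  exact congrArg (Φ (γ s)) (derivWithin_of_mem_nhds (Icc_mem_nhds hs.1 hs.2)).symm

theorem stmt_14_general (r R : ℝ) (hr : 0 < r) (hrR : r < R)
    (γ : ℝ → ℂ)
    (hin : ∀ t : ℝ, t ∈ Set.Icc (0 : ℝ) 1 → r < ‖γ t‖ ∧ ‖γ t‖ < R)
    -- piecewise continuously differentiable: there is a partition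
    -- `0 = t 0 < t 1 < ⋯ < t n = 1` such that `γ` is `C¹` on each piece
    (n : ℕ) (t : ℕ → ℝ) (ht0 : t 0 = 0) (htn : t n = 1)
    (htmono : ∀ i, i < n → t i < t (i + 1))
    (hsmooth : ∀ i, i < n → ContDiffOn ℝ 1 γ (Set.Icc (t i) (t (i + 1)))) :
    2 * Real.pi ^ 2 *
        |(1 / (2 * Real.pi)) * (∫ s in (0 : ℝ)..1, deriv γ s / γ s).im| /
          Real.log (R / r) ≤
      ∫ s in (0 : ℝ)..1,
        Real.pi * ‖deriv γ s‖ /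
          (‖γ s‖ *
            Real.sin (Real.pi * Real.log (‖γ s‖ / r) / Real.log (R / r)) *
            Real.log (R / r)) := by
  set L := log (R / r)
  have hL : 0 < L := log_pos ((one_lt_div hr).2 hrR)
  have hγU : MapsTo γ (Icc (t 0) (t n)) {z | r < ‖z‖ ∧ ‖z‖ < R} := by
    rw [ht0, htn]; exact hin
  have hlog : IntervalIntegrable (fun s ↦ deriv γ s / γ s) volume 0 1 := by
    rw [← ht0, ← htn]
    refine intervalIntegrable_comp_deriv_of_piecewise_contDiffOn (Φ := fun z w ↦ w / z)
      htmono hsmooth hγU (continuousOn_snd.div continuousOn_fst fun p hp ↦ ?_)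
    exact norm_pos_iff.1 (hr.trans hp.1.1)
  have hlen :
      IntervalIntegrable (fun s ↦ annulusHypDensity r R (γ s) * ‖deriv γ s‖) volume 0 1 := by
    rw [← ht0, ← htn]
    exact intervalIntegrable_comp_deriv_of_piecewise_contDiffOn
      (Φ := fun z w ↦ annulusHypDensity r R z * ‖w‖) htmono hsmooth hγU
      (((continuousOn_annulusHypDensity hr).comp continuousOn_fst fun _ hp ↦ hp.1).mul
        continuousOn_snd.norm)
  set I := ∫ s in (0 : ℝ)..1, deriv γ s / γ s
  calc 2 * π ^ 2 * |1 / (2 * π) * I.im| / L = π / L * |I.im| := by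
        rw [abs_mul, abs_of_pos (by positivity : (0 : ℝ) < 1 / (2 * π))]
        field_simp
    _ ≤ π / L * ∫ s in (0 : ℝ)..1, ‖deriv γ s / γ s‖ := by
        gcongr
        exact (Complex.abs_im_le_norm I).trans
          (intervalIntegral.norm_integral_le_integral_norm zero_le_one)
    _ = ∫ s in (0 : ℝ)..1, π / L * ‖deriv γ s / γ s‖ :=
        (intervalIntegral.integral_const_mul _ _).symm
    _ ≤ ∫ s in (0 : ℝ)..1, annulusHypDensity r R (γ s) * ‖deriv γ s‖ :=
        intervalIntegral.integral_mono_on zero_le_one (hlog.norm.const_mul _) hlen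
          fun s hs ↦ pi_div_log_mul_norm_div_le hr (hin s hs).1 (hin s hs).2 _
    _ = _ := intervalIntegral.integral_congr fun s _ ↦ div_mul_eq_mul_div _ _ _

/-- for a piecewise continuously differentiable closed curve `γ` in
the annulus `r < |z| < R`, the hyperbolic length of `γ` is at least
`2π² |n(γ,0)| / log(R/r)`, where `n(γ,0) = (1/(2π)) Im ∫₀¹ γ'(t)/γ(t) dt` is the
winding number of `γ` about `0`. -/
theorem stmt_14 (r R : ℝ) (hr : 0 < r) (hrR : r < R)
    (γ : ℝ → ℂ) (hclosed : γ 0 = γ 1)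
    (hin : ∀ t : ℝ, t ∈ Set.Icc (0 : ℝ) 1 → r < ‖γ t‖ ∧ ‖γ t‖ < R)
    -- piecewise continuously differentiable: there is a partition
    -- `0 = t 0 < t 1 < ⋯ < t n = 1` such that `γ` is `C¹` on each piece
    (n : ℕ) (hn : 0 < n) (t : ℕ → ℝ) (ht0 : t 0 = 0) (htn : t n = 1)
    (htmono : ∀ i, i < n → t i < t (i + 1))
    (hsmooth : ∀ i, i < n → ContDiffOn ℝ 1 γ (Set.Icc (t i) (t (i + 1)))) :
    2 * Real.pi ^ 2 *
        |(1 / (2 * Real.pi)) * (∫ s in (0 : ℝ)..1, deriv γ s / γ s).im| /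
          Real.log (R / r) ≤
      ∫ s in (0 : ℝ)..1,
        Real.pi * ‖deriv γ s‖ /
          (‖γ s‖ *
            Real.sin (Real.pi * Real.log (‖γ s‖ / r) / Real.log (R / r)) *
            Real.log (R / r)) :=
  stmt_14_general r R hr hrR γ hin n t ht0 htn htmono hsmooth
end

section
/- There exists Q such that for every even integer q_0 ≥ Q and for all k ≥ 0, f maps the annulus ann(0; 4 a_k, a_{k+1}/4) into the annulus ann(0; 4 a_{k+1}, a_{k+2}/4). -/
/-
On the annulus, `log ‖f z‖ = 2 log ‖z‖ + ∑ⱼ q j * log ‖1 - z / a j‖`. The factors with `j ≤ k`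
behave like `z / a j`, those with `j > k` like `1`; the terms with `j ≥ k + 2` add up to at most
`1 / 3` in absolute value because `q j / a j` at least halves at each step. The upper bound
follows from `∑_{j ≤ k} q j ≤ (1 + 10⁻³) q k`, `log ‖z‖ < q k` and
`log ‖1 - z / a (k + 1)‖ ≤ 1 / 4`, so that `log ‖f z‖ ≲ (1 + 3 / 8) (q k)² < q (k + 1)`.
For the lower bound the term `k` alone gives `q k * log 3 > q k + log 4`, unless the term `k + 1`
is very negative, which only happens near the outer circle, where `log ‖z‖ ≈ q k` makes the
term `k` of order `(q k)² / 2`.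
-/

open Real Finset

section LogBounds

variable {E : Type*} [SeminormedRing E] [NormOneClass E]

theorem log_norm_one_sub_le_norm (w : E) : log ‖1 - w‖ ≤ ‖w‖ := by
  rcases (norm_nonneg (1 - w)).eq_or_lt with h | h
  · rw [← h, log_zero]; exact norm_nonneg w
  · have := norm_sub_le (1 : E) w
    rw [norm_one] at this
    linarith [log_le_sub_one_of_pos h]

theorem log_mul_norm_le_log_norm_one_sub {w : E} (hw : 4 ≤ ‖w‖) :
    log (3 / 4 * ‖w‖) ≤ log ‖1 - w‖ := by
  have := norm_sub_norm_le w (1 : E)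
  rw [norm_one, norm_sub_rev] at this
  exact log_le_log (by positivity) (by linarith)

theorem log_norm_one_sub_le_log_two_mul {w : E} (hw : 1 < ‖w‖) :
    log ‖1 - w‖ ≤ log (2 * ‖w‖) := by
  have h₁ := norm_sub_norm_le w (1 : E)
  have h₂ := norm_sub_le (1 : E) w
  rw [norm_one, norm_sub_rev] at h₁
  rw [norm_one] at h₂
  exact log_le_log (by linarith) (by linarith)

theorem log_one_sub_norm_le_log_norm_one_sub {w : E} (hw : ‖w‖ < 1) :
    log (1 - ‖w‖) ≤ log ‖1 - w‖ := by
  have := norm_sub_norm_le (1 : E) w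
  rw [norm_one] at this
  exact log_le_log (by linarith) this

theorem neg_four_thirds_mul_le_log_one_sub {d : ℝ} (h₀ : 0 ≤ d) (h : d ≤ 1 / 4) :
    -(4 / 3 * d) ≤ log (1 - d) := by
  have hpos : 0 < 1 - d := by linarith
  have key : -(4 / 3 * d) ≤ 1 - (1 - d)⁻¹ := by
    rw [le_sub_iff_add_le, ← le_sub_iff_add_le', inv_le_iff_one_le_mul₀ hpos]
    nlinarith
  exact key.trans (one_sub_inv_le_log_of_pos hpos)

theorem abs_log_norm_one_sub_le {w : E} (hw : ‖w‖ ≤ 1 / 4) :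
    |log ‖1 - w‖| ≤ 4 / 3 * ‖w‖ := by
  have h₁ := neg_four_thirds_mul_le_log_one_sub (norm_nonneg w) hw
  have h₂ := log_one_sub_norm_le_log_norm_one_sub (w := w) (by linarith)
  have h₃ := log_norm_one_sub_le_norm w
  rw [abs_le]
  constructor <;> linarith [norm_nonneg w]

theorem log_three_quarters_le_log_norm_one_sub {w : E} (hw : ‖w‖ ≤ 1 / 4) :
    log (3 / 4) ≤ log ‖1 - w‖ :=
  (log_le_log (by norm_num) (by linarith)).trans
    (log_one_sub_norm_le_log_norm_one_sub (by linarith))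

end LogBounds

theorem neg_three_tenths_le_log_three_quarters : -(3 / 10) ≤ log (3 / 4) := by
  rw [neg_le, ← log_inv, log_le_iff_le_exp (by norm_num)]
  nlinarith [quadratic_le_exp_of_nonneg (x := 3 / 10) (by norm_num)]

theorem summable_and_tsum_le_of_succ_le_half {w : ℕ → ℝ} (h₀ : ∀ n, 0 ≤ w n)
    (h : ∀ n, w (n + 1) ≤ w n / 2) : Summable w ∧ ∑' n, w n ≤ 2 * w 0 := by
  have hle : ∀ n, w n ≤ w 0 * (1 / 2) ^ n := fun n => by
    rw [mul_comm]; exact le_geom (by norm_num) n fun k _ => by linarith [h k]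
  have hg := hasSum_geometric_two.mul_left (w 0)
  have hw : Summable w := hg.summable.of_nonneg_of_le h₀ hle
  exact ⟨hw, by linarith [hw.tsum_le_tsum hle hg.summable, hg.tsum_eq]⟩

theorem norm_tprod_eq_exp_tsum_log_norm {ι E : Type*} [NormedCommRing E] [NormMulClass E]
    [NormOneClass E] {f : ι → E} (hf : Multipliable f) (h₀ : ∀ i, f i ≠ 0)
    (hs : Summable fun i => log ‖f i‖) : ‖∏' i, f i‖ = exp (∑' i, log ‖f i‖) := by
  rw [hf.norm_tprod, rexp_tsum_eq_tprod (fun i => norm_pos_iff.2 (h₀ i)) hs]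

structure Admissible (q : ℕ → ℕ) (a : ℕ → ℝ) : Prop where
  le_q_zero : 10 ^ 6 ≤ q 0
  two_mul_q_succ : ∀ k, 2 * q (k + 1) = 3 * q k ^ 2
  a_zero : a 0 = exp ((q 0 : ℝ) / 2)
  a_succ : ∀ k, a (k + 1) = exp (q k)

/-- The `j`-th summand of `log ‖f z / z²‖`. -/
noncomputable def logNormFactor (q : ℕ → ℕ) (a : ℕ → ℝ) (z : ℂ) (j : ℕ) : ℝ :=
  q j * log ‖1 - z / a j‖

namespace Admissible

variable {q : ℕ → ℕ} {a : ℕ → ℝ}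

theorem q_succ (h : Admissible q a) (k : ℕ) : (q (k + 1) : ℝ) = 3 / 2 * (q k : ℝ) ^ 2 := by
  have := congrArg (Nat.cast : ℕ → ℝ) (h.two_mul_q_succ k)
  push_cast at this
  linarith

theorem le_q (h : Admissible q a) (k : ℕ) : (10 ^ 6 : ℝ) ≤ q k := by
  induction k with
  | zero => exact_mod_cast h.le_q_zero
  | succ k ih => rw [h.q_succ]; nlinarith

theorem sum_range_q_le (h : Admissible q a) (k : ℕ) :
    ∑ j ∈ range (k + 1), (q j : ℝ) ≤ 1001 / 1000 * q k := by
  induction k with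
  | zero => simp only [zero_add, sum_range_one]; nlinarith [h.le_q 0]
  | succ k ih => rw [sum_range_succ, h.q_succ]; nlinarith [h.le_q k]

theorem three_mul_q_sq_le_exp (h : Admissible q a) (k : ℕ) :
    3 * (q k : ℝ) ^ 2 ≤ exp (q k / 2) := by
  have hq := h.le_q k
  have := pow_div_factorial_le_exp (x := (q k : ℝ) / 2) (by positivity) 3
  norm_num [Nat.factorial] at this
  nlinarith

theorem log_a_le_half (h : Admissible q a) (k : ℕ) : log (a k) ≤ q k / 2 := by
  cases k with
  | zero => rw [h.a_zero, log_exp]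
  | succ k => rw [h.a_succ, log_exp, h.q_succ]; nlinarith [h.le_q k]

theorem one_le_a (h : Admissible q a) (k : ℕ) : 1 ≤ a k := by
  cases k with
  | zero => rw [h.a_zero]; exact one_le_exp (by positivity)
  | succ k => rw [h.a_succ]; exact one_le_exp (by positivity)

theorem a_pos (h : Admissible q a) (k : ℕ) : 0 < a k :=
  one_pos.trans_le (h.one_le_a k)

theorem exp_mul_a_le (h : Admissible q a) (k : ℕ) : exp (q k / 2) * a k ≤ a (k + 1) := by
  cases k with
  | zero => rw [h.a_zero, h.a_succ, ← exp_add, add_halves]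
  | succ k =>
    rw [h.a_succ, h.a_succ, ← exp_add, exp_le_exp, h.q_succ]
    nlinarith [h.le_q k]

theorem a_mono (h : Admissible q a) : Monotone a :=
  monotone_nat_of_le_succ fun k =>
    le_trans (le_mul_of_one_le_left (h.a_pos k).le (one_le_exp (by positivity)))
      (h.exp_mul_a_le k)

theorem q_div_a_succ_le (h : Admissible q a) (k : ℕ) :
    (q (k + 1) : ℝ) / a (k + 1) ≤ 1 / (2 * a k) := by
  have ha := h.a_pos k
  rw [div_le_div_iff₀ (h.a_pos _) (by positivity), h.q_succ]
  nlinarith [h.three_mul_q_sq_le_exp k, h.exp_mul_a_le k]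

theorem q_div_a_succ_le_half (h : Admissible q a) (k : ℕ) :
    (q (k + 1) : ℝ) / a (k + 1) ≤ (q k / a k) / 2 := by
  refine (h.q_div_a_succ_le k).trans ?_
  rw [div_div, div_le_div_iff₀ (by linarith [h.a_pos k]) (by linarith [h.a_pos k])]
  nlinarith [h.le_q k, h.a_pos k]

variable {k : ℕ} {z : ℂ}

theorem norm_div_a (h : Admissible q a) (j : ℕ) : ‖z / a j‖ = ‖z‖ / a j := by
  rw [norm_div, Complex.norm_real, norm_of_nonneg (h.a_pos j).le]

theorem four_le_norm_div (h : Admissible q a) (hz : 4 * a k < ‖z‖) {j : ℕ} (hj : j ≤ k) :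
    4 ≤ ‖z / a j‖ := by
  rw [h.norm_div_a, le_div_iff₀ (h.a_pos j)]
  linarith [h.a_mono hj]

theorem norm_div_le_quarter (h : Admissible q a) (hz : ‖z‖ < a (k + 1) / 4) {j : ℕ}
    (hj : k < j) : ‖z / a j‖ ≤ 1 / 4 := by
  rw [h.norm_div_a, div_le_iff₀ (h.a_pos j)]
  linarith [h.a_mono (Nat.succ_le_of_lt hj)]

theorem abs_logNormFactor_le (h : Admissible q a) (hz : ‖z‖ < a (k + 1) / 4) {j : ℕ}
    (hj : k < j) : |logNormFactor q a z j| ≤ 4 / 3 * ‖z‖ * (q j / a j) := by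
  have := abs_log_norm_one_sub_le (h.norm_div_le_quarter hz hj)
  rw [logNormFactor, abs_mul, Nat.abs_cast, h.norm_div_a] at *
  calc (q j : ℝ) * |log ‖1 - z / a j‖| ≤ q j * (4 / 3 * (‖z‖ / a j)) := by gcongr
    _ = 4 / 3 * ‖z‖ * (q j / a j) := by ring

theorem summable_and_tsum_q_div_a_tail_le (h : Admissible q a) (n : ℕ) :
    Summable (fun i => (q (i + n) : ℝ) / a (i + n)) ∧
      ∑' i, (q (i + n) : ℝ) / a (i + n) ≤ 2 * (q n / a n) := by
  have := summable_and_tsum_le_of_succ_le_half (w := fun i => (q (i + n) : ℝ) / a (i + n))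
    (fun i => div_nonneg (Nat.cast_nonneg _) (h.a_pos _).le)
    (fun i => by simpa only [add_right_comm i 1 n] using h.q_div_a_succ_le_half (i + n))
  simpa only [zero_add] using this

theorem summable_logNormFactor (h : Admissible q a) (hz : ‖z‖ < a (k + 1) / 4) :
    Summable (logNormFactor q a z) := by
  refine (summable_nat_add_iff (k + 1)).1 <| Summable.of_norm_bounded
    ((h.summable_and_tsum_q_div_a_tail_le (k + 1)).1.mul_left (4 / 3 * ‖z‖)) fun i => ?_
  exact h.abs_logNormFactor_le hz (by omega)

theorem abs_tsum_logNormFactor_tail_le (h : Admissible q a) (hz : ‖z‖ < a (k + 1) / 4) :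
    |∑' i, logNormFactor q a z (i + (k + 2))| ≤ 1 / 3 := by
  obtain ⟨hs, hle⟩ := h.summable_and_tsum_q_div_a_tail_le (k + 2)
  have hbound := tsum_of_norm_bounded (f := fun i => logNormFactor q a z (i + (k + 2)))
    (hs.mul_left (4 / 3 * ‖z‖)).hasSum fun i => h.abs_logNormFactor_le hz (by omega)
  rw [tsum_mul_left] at hbound
  have hnext := h.q_div_a_succ_le (k + 1)
  have hz' := h.norm_div_le_quarter hz (Nat.lt_succ_self k)
  rw [h.norm_div_a] at hz'
  have ha := h.a_pos (k + 1)
  refine hbound.trans ?_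
  calc 4 / 3 * ‖z‖ * ∑' i, (q (i + (k + 2)) : ℝ) / a (i + (k + 2))
      ≤ 4 / 3 * ‖z‖ * (2 * (1 / (2 * a (k + 1)))) := by gcongr; linarith
    _ = 4 / 3 * (‖z‖ / a (k + 1)) := by field_simp
    _ ≤ 1 / 3 := by linarith

theorem norm_mul_tprod_eq (h : Admissible q a) (hm : Multipliable fun j => (1 - z / a j) ^ q j)
    (hz₁ : 4 * a k < ‖z‖) (hz₂ : ‖z‖ < a (k + 1) / 4) :
    ‖z ^ 2 * ∏' j, (1 - z / a j) ^ q j‖ = exp (2 * log ‖z‖ + ∑' j, logNormFactor q a z j) := by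
  have hz : 0 < ‖z‖ := by linarith [h.a_pos k]
  have hne : ∀ j, 1 - z / a j ≠ 0 := fun j => by
    have : ‖z / a j‖ ≠ 1 := by
      rcases le_or_gt j k with hj | hj
      · linarith [h.four_le_norm_div hz₁ hj]
      · linarith [h.norm_div_le_quarter hz₂ hj]
    exact sub_ne_zero.2 fun h1 => this (by rw [← h1, norm_one])
  have hlog : ∀ j, log ‖(1 - z / a j) ^ q j‖ = logNormFactor q a z j := fun j => by
    rw [norm_pow, log_pow, logNormFactor]
  have hsq : exp (2 * log ‖z‖) = ‖z‖ ^ 2 := by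
    rw [← exp_log (pow_pos hz 2), log_pow, Nat.cast_ofNat]
  rw [norm_mul, norm_tprod_eq_exp_tsum_log_norm hm (fun j => pow_ne_zero _ (hne j))
    (by simpa only [hlog] using h.summable_logNormFactor hz₂), norm_pow, exp_add, hsq]
  simp only [hlog]

theorem le_logNormFactor_add_succ (h : Admissible q a) (hz₁ : 4 * a k < ‖z‖)
    (hz₂ : ‖z‖ < a (k + 1) / 4) :
    21 / 20 * (q k : ℝ) ≤ logNormFactor q a z k + logNormFactor q a z (k + 1) := by
  have hz : 0 < ‖z‖ := by linarith [h.a_pos k]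
  have hq := h.le_q k
  have hk : (q k : ℝ) * (log (3 / 4) + (log ‖z‖ - log (a k))) ≤ logNormFactor q a z k := by
    have := log_mul_norm_le_log_norm_one_sub (h.four_le_norm_div hz₁ le_rfl)
    rw [h.norm_div_a, log_mul (by norm_num) (div_pos hz (h.a_pos k)).ne',
      log_div hz.ne' (h.a_pos k).ne'] at this
    exact mul_le_mul_of_nonneg_left this (Nat.cast_nonneg _)
  have h34 := neg_three_tenths_le_log_three_quarters
  rcases le_or_gt (log ‖z‖) (24 / 25 * q k) with ht | ht
  · -- `‖z‖ ≤ exp (-q k / 25) * a (k + 1)` leaves the factor `k + 1` only `q k / 50` to take away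
    have hsmall : ‖z‖ / a (k + 1) * q k ≤ 1 / 100 := by
      have hexp : 100 * (q k : ℝ) ≤ exp (q k / 25) := by
        nlinarith [quadratic_le_exp_of_nonneg (x := (q k : ℝ) / 25) (by positivity)]
      have hexp' : exp (log ‖z‖ - q k) * exp (q k / 25) ≤ 1 := by
        rw [← exp_add, exp_le_one_iff]; linarith
      rw [h.a_succ, ← exp_log hz, ← exp_sub]
      nlinarith [exp_pos (log ‖z‖ - q k)]
    have hnext : -(q k / 50 : ℝ) ≤ logNormFactor q a z (k + 1) := by
      have habs := h.abs_logNormFactor_le hz₂ (Nat.lt_succ_self k)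
      have heq : 4 / 3 * ‖z‖ * (q (k + 1) / a (k + 1)) =
          2 * q k * (‖z‖ / a (k + 1) * q k) := by
        rw [h.q_succ]; ring
      rw [heq] at habs
      nlinarith [neg_abs_le (logNormFactor q a z (k + 1))]
    have h4 : log 4 + log (a k) < log ‖z‖ := by
      rw [← log_mul (by norm_num) (h.a_pos k).ne']
      exact log_lt_log (by linarith [h.a_pos k]) hz₁
    have hlog4 : 1.38 < log 4 := by
      rw [show (4 : ℝ) = 2 ^ 2 by norm_num, log_pow]; push_cast; linarith [log_two_gt_d9]
    nlinarith
  · -- `log ‖z‖ - log (a k) > 0.46 * q k` lets the factor `k` outweigh `q (k + 1) * log (3 / 4)`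
    have hnext : (q (k + 1) : ℝ) * log (3 / 4) ≤ logNormFactor q a z (k + 1) :=
      mul_le_mul_of_nonneg_left
        (log_three_quarters_le_log_norm_one_sub (h.norm_div_le_quarter hz₂ (Nat.lt_succ_self k)))
        (Nat.cast_nonneg _)
    rw [h.q_succ] at hnext
    have hak := h.log_a_le_half k
    nlinarith

theorem log_four_add_lt (h : Admissible q a) (hz₁ : 4 * a k < ‖z‖)
    (hz₂ : ‖z‖ < a (k + 1) / 4) :
    log 4 + q k < 2 * log ‖z‖ + ∑' j, logNormFactor q a z j := by
  rw [← (h.summable_logNormFactor hz₂).sum_add_tsum_nat_add (k + 2), sum_range_succ,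
    sum_range_succ]
  have hinner : 0 ≤ ∑ j ∈ range k, logNormFactor q a z j := sum_nonneg fun j hj => by
    have hw := h.four_le_norm_div hz₁ (mem_range.1 hj).le
    exact mul_nonneg (Nat.cast_nonneg _) <|
      (log_nonneg (by linarith)).trans (log_mul_norm_le_log_norm_one_sub hw)
  have hpair := h.le_logNormFactor_add_succ hz₁ hz₂
  have htail := abs_le.1 (h.abs_tsum_logNormFactor_tail_le hz₂)
  have hz : 1 ≤ ‖z‖ := by linarith [h.one_le_a k]
  have hlog4 : log 4 ≤ 3 := by linarith [log_le_sub_one_of_pos (x := 4) (by norm_num)]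
  linarith [log_nonneg hz, h.le_q k]

theorem two_mul_log_add_tsum_lt (h : Admissible q a) (hz₁ : 4 * a k < ‖z‖)
    (hz₂ : ‖z‖ < a (k + 1) / 4) :
    2 * log ‖z‖ + ∑' j, logNormFactor q a z j < q (k + 1) - log 4 := by
  rw [← (h.summable_logNormFactor hz₂).sum_add_tsum_nat_add (k + 2), sum_range_succ]
  have hz : 0 < ‖z‖ := by linarith [h.a_pos k]
  have ht : log ‖z‖ < q k - log 4 := by
    rw [lt_sub_iff_add_lt, ← log_mul hz.ne' (by norm_num), ← log_exp (q k), ← h.a_succ]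
    exact log_lt_log (by positivity) (by linarith)
  have ht₀ : 0 ≤ log ‖z‖ := log_nonneg (by linarith [h.one_le_a k])
  have hinner : ∑ j ∈ range (k + 1), logNormFactor q a z j ≤
      (∑ j ∈ range (k + 1), (q j : ℝ)) * (log ‖z‖ + 1) := by
    rw [sum_mul]
    refine sum_le_sum fun j hj => mul_le_mul_of_nonneg_left ?_ (Nat.cast_nonneg _)
    have hw := h.four_le_norm_div hz₁ (Nat.lt_succ_iff.1 (mem_range.1 hj))
    have hle := log_norm_one_sub_le_log_two_mul (by linarith : 1 < ‖z / a j‖)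
    rw [h.norm_div_a, ← mul_div_assoc, log_div (by positivity) (h.a_pos j).ne',
      log_mul two_ne_zero hz.ne'] at hle
    linarith [log_nonneg (h.one_le_a j), log_two_lt_d9]
  have hnext : logNormFactor q a z (k + 1) ≤ q (k + 1) / 4 := by
    have hw := h.norm_div_le_quarter hz₂ (Nat.lt_succ_self k)
    have := mul_le_mul_of_nonneg_left ((log_norm_one_sub_le_norm _).trans hw)
      (Nat.cast_nonneg (q (k + 1)))
    rw [logNormFactor]; linarith
  have htail := abs_le.1 (h.abs_tsum_logNormFactor_tail_le hz₂)
  have hlog4 : 0 < log 4 := log_pos (by norm_num)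
  have hsum := mul_le_mul (h.sum_range_q_le k) (by linarith : log ‖z‖ + 1 ≤ q k + 1)
    (by linarith) (by positivity)
  rw [h.q_succ] at hnext ⊢
  nlinarith [h.le_q k]

theorem mapsTo_annulus (h : Admissible q a) (hm : Multipliable fun j => (1 - z / a j) ^ q j)
    (hz₁ : 4 * a k < ‖z‖) (hz₂ : ‖z‖ < a (k + 1) / 4) :
    4 * a (k + 1) < ‖z ^ 2 * ∏' j, (1 - z / a j) ^ q j‖ ∧
      ‖z ^ 2 * ∏' j, (1 - z / a j) ^ q j‖ < a (k + 2) / 4 := by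
  rw [h.norm_mul_tprod_eq hm hz₁ hz₂, h.a_succ, show a (k + 2) = exp (q (k + 1)) from h.a_succ _]
  constructor
  · calc 4 * exp (q k) = exp (log 4 + q k) := by rw [exp_add, exp_log (by norm_num)]
      _ < _ := exp_lt_exp.2 (h.log_four_add_lt hz₁ hz₂)
  · calc _ < exp (q (k + 1) - log 4) := exp_lt_exp.2 (h.two_mul_log_add_tsum_lt hz₁ hz₂)
      _ = exp (q (k + 1)) / 4 := by rw [exp_sub, exp_log (by norm_num)]

end Admissible

/-- for `q_0` even and large enough, `f` maps
`ann(0; 4 a_k, a_{k+1}/4)` into `ann(0; 4 a_{k+1}, a_{k+2}/4)` for all `k ≥ 0`.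
Here `q_{k+1} = (3/2) q_k²`, `a_0 = e^{q_0/2}`, `a_{k+1} = e^{q_k}` and
`f(z) = z² ∏_{k=0}^∞ (1 - z/a_k)^{q_k}`. -/
theorem stmt_15 :
    ∃ Q : ℕ, ∀ q0 : ℕ, Even q0 → 0 < q0 → Q ≤ q0 →
      ∀ (q : ℕ → ℕ) (a : ℕ → ℝ) (f : ℂ → ℂ),
        q 0 = q0 →
        (∀ k, 2 * q (k + 1) = 3 * q k ^ 2) →
        a 0 = Real.exp ((q0 : ℝ) / 2) →
        (∀ k, a (k + 1) = Real.exp (q k)) →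
        (∀ z : ℂ, Multipliable (fun k : ℕ => (1 - z / (a k : ℂ)) ^ q k)) →
        (∀ z : ℂ, f z = z ^ 2 * ∏' k : ℕ, (1 - z / (a k : ℂ)) ^ q k) →
        ∀ k : ℕ, ∀ z : ℂ,
          4 * a k < ‖z‖ → ‖z‖ < a (k + 1) / 4 →
            4 * a (k + 1) < ‖f z‖ ∧ ‖f z‖ < a (k + 2) / 4 := by
  refine ⟨10 ^ 6, fun q0 _ _ hQ q a f hq0 hq ha0 ha hm hf k z hz₁ hz₂ => ?_⟩
  subst hq0
  rw [hf]
  exact Admissible.mapsTo_annulus ⟨hQ, hq, ha0, ha⟩ (hm z) hz₁ hz₂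
end
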